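/- For every odd prime p, Bell(p-1) ≡ D_{p-1} + 1 (mod p), where D_{p-1} is the derangement number. -/

import Mathlib

/-- Bell numbers via the standard recurrence. -/
def bell : ℕ → ℕ
  | 0 => 1
  | (n+1) => ∑ k ∈ (Finset.range (n+1)).attach, n.choose k.1 * bell k.1
  decreasing_by exact Finset.mem_range.mp k.2

open Polynomial Finset

lemma bell_succ (n : ℕ) :
    bell (n + 1) = ∑ k ∈ Finset.range (n + 1), n.choose k * bell k := by
  rw [bell]
  exact Finset.sum_attach (Finset.range (n + 1)) (fun k => n.choose k * bell k)

/-- The Bell umbral functional: the linear map sending `X ^ i` to `bell i`. -/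
noncomputable def bellPhi (p : ℕ) : Polynomial (ZMod p) →ₗ[ZMod p] ZMod p :=
  (Polynomial.basisMonomials (ZMod p)).constr (ZMod p) fun i => (bell i : ZMod p)

lemma bellPhi_X_pow (p n : ℕ) : bellPhi p (X ^ n) = (bell n : ZMod p) := by
  have h := (Polynomial.basisMonomials (ZMod p)).constr_basis (ZMod p)
    (fun i => (bell i : ZMod p)) n
  rw [Polynomial.coe_basisMonomials] at h
  simpa [bellPhi, ← Polynomial.X_pow_eq_monomial] using h

lemma bellPhi_C_mul (p : ℕ) (a : ZMod p) (f : Polynomial (ZMod p)) :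
    bellPhi p (C a * f) = a * bellPhi p f := by
  rw [← Polynomial.smul_eq_C_mul, map_smul, smul_eq_mul]

lemma bellPhi_add_pow (p n : ℕ) :
    bellPhi p ((X + 1) ^ n) = (bell (n + 1) : ZMod p) := by
  rw [add_pow, map_sum, bell_succ]
  push_cast
  refine Finset.sum_congr rfl fun k hk => ?_
  rw [one_pow, mul_one, mul_comm, ← Polynomial.C_eq_natCast, bellPhi_C_mul, bellPhi_X_pow]

lemma bellPhi_X_mul (p : ℕ) (f : Polynomial (ZMod p)) :
    bellPhi p (X * f) = bellPhi p (f.comp (X + 1)) := by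
  induction f using Polynomial.induction_on' with
  | add f g hf hg => rw [mul_add, map_add, hf, hg, add_comp, map_add]
  | monomial n a =>
      rw [← Polynomial.C_mul_X_pow_eq_monomial, mul_comp, C_comp, pow_comp, X_comp,
        bellPhi_C_mul, bellPhi_add_pow, show (X : Polynomial (ZMod p)) * (C a * X ^ n)
          = C a * X ^ (n + 1) by ring, bellPhi_C_mul, bellPhi_X_pow]

/-- Falling factorial polynomial `x(x-1)⋯(x-k+1)`. -/
noncomputable def fallPoly (p : ℕ) : ℕ → Polynomial (ZMod p)
  | 0 => 1
  | (k+1) => fallPoly p k * (X - C (k : ZMod p))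

/-- Shifted falling factorial `(x-1)(x-2)⋯(x-k)`. -/
noncomputable def gfallPoly (p k : ℕ) : Polynomial (ZMod p) :=
  (fallPoly p k).comp (X - 1)

lemma gfallPoly_succ (p k : ℕ) :
    gfallPoly p (k + 1) = gfallPoly p k * (X - C ((k : ZMod p) + 1)) := by
  rw [gfallPoly, fallPoly, mul_comp, sub_comp, X_comp, C_comp, gfallPoly, C_add, C_1]
  ring

lemma fallPoly_succ_eq (p k : ℕ) : fallPoly p (k + 1) = X * gfallPoly p k := by
  induction k with
  | zero => simp [fallPoly, gfallPoly]
  | succ k ih =>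
      rw [fallPoly, ih, gfallPoly_succ]
      push_cast
      ring

lemma bellPhi_fallPoly (p k : ℕ) : bellPhi p (fallPoly p k) = 1 := by
  induction k with
  | zero =>
      have := bellPhi_X_pow p 0
      simpa [bell, fallPoly] using this
  | succ k ih =>
      rw [fallPoly_succ_eq, bellPhi_X_mul, gfallPoly, comp_assoc]
      have h : ((X : Polynomial (ZMod p)) - 1).comp (X + 1) = X := by
        rw [sub_comp, X_comp, one_comp]; ring
      rw [h, comp_X, ih]

lemma bellPhi_gfallPoly (p k : ℕ) :
    bellPhi p (gfallPoly p k) = (-1) ^ k * (numDerangements k : ZMod p) := by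
  induction k with
  | zero =>
      have := bellPhi_X_pow p 0
      simp only [gfallPoly, fallPoly, one_comp]
      simpa [bell] using this
  | succ k ih =>
      have hd : (numDerangements (k + 1) : ZMod p)
          = ((k : ZMod p) + 1) * (numDerangements k : ZMod p) - (-1) ^ k := by
        have h := congrArg (fun z : ℤ => (z : ZMod p)) (numDerangements_succ k)
        push_cast at h
        exact h
      have ht : ((-1 : ZMod p)) ^ k * (-1) ^ k = 1 := by
        rw [← mul_pow]; simp
      have heq : gfallPoly p (k + 1)
          = fallPoly p (k + 1) - C ((k : ZMod p) + 1) * gfallPoly p k := by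
        rw [gfallPoly_succ, fallPoly_succ_eq]
        ring
      rw [heq, map_sub, bellPhi_fallPoly, bellPhi_C_mul, ih, hd]
      rw [pow_succ]
      linear_combination -ht

lemma gfallPoly_eq_prod (p k : ℕ) :
    gfallPoly p k = ∏ j ∈ Finset.range k, (X - C (((j : ZMod p)) + 1)) := by
  induction k with
  | zero => simp [gfallPoly, fallPoly]
  | succ k ih => rw [gfallPoly_succ, ih, Finset.prod_range_succ]

/-- For every odd prime p, Bell(p-1) ≡ D_{p-1} + 1 (mod p). -/
theorem bell_derangement_congruence (p : ℕ) (hp : p.Prime) (hodd : Odd p) :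
    bell (p - 1) ≡ numDerangements (p - 1) + 1 [MOD p] := by
  haveI : Fact p.Prime := ⟨hp⟩
  have hp1 : 1 < p := hp.one_lt
  -- X^p - X = ∏ a : ZMod p, (X - C a)
  have hcard : Fintype.card (ZMod p) = p := ZMod.card p
  have hmonic : (X ^ p - X : Polynomial (ZMod p)).Monic := by
    apply Polynomial.monic_X_pow_sub
    rw [Polynomial.degree_X]
    exact_mod_cast hp1
  have hdeg : (X ^ p - X : Polynomial (ZMod p)).natDegree = p :=
    FiniteField.X_pow_card_sub_X_natDegree_eq _ hp1
  have hroots : (X ^ p - X : Polynomial (ZMod p)).roots = Finset.univ.val := by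
    have := FiniteField.roots_X_pow_card_sub_X (ZMod p)
    rwa [hcard] at this
  have hsplit : (X ^ p - X : Polynomial (ZMod p)) = ∏ a : ZMod p, (X - C a) := by
    rw [← Polynomial.prod_multiset_X_sub_C_of_monic_of_roots_card_eq hmonic
      (by rw [hroots, hdeg]; simpa using hcard), hroots]
    rfl
  -- convert the product over `univ` to a product over `range p`
  have hprod_range : ∏ j ∈ Finset.range p, ((X : Polynomial (ZMod p)) - C ((j : ZMod p)))
      = ∏ a : ZMod p, (X - C a) := by
    refine Finset.prod_bij' (fun j _ => ((j : ZMod p))) (fun a _ => a.val)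
      (fun j hj => Finset.mem_univ _) (fun a _ => Finset.mem_range.mpr (ZMod.val_lt a))
      (fun j hj => ZMod.val_cast_of_lt (Finset.mem_range.mp hj))
      (fun a _ => ZMod.natCast_rightInverse a) (fun j _ => rfl)
  -- peel off the j = 0 factor
  have hpeel : ∀ m, ∏ j ∈ Finset.range (m + 1), ((X : Polynomial (ZMod p)) - C ((j : ZMod p)))
      = gfallPoly p m * X := by
    intro m
    rw [Finset.prod_range_succ', gfallPoly_eq_prod]
    push_cast
    simp
  have hpeel' := hpeel (p - 1)
  rw [Nat.sub_add_cancel hp.pos] at hpeel'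
  have key : (X : Polynomial (ZMod p)) ^ (p - 1) - 1 = gfallPoly p (p - 1) := by
    have hX : (X : Polynomial (ZMod p)) ≠ 0 := Polynomial.X_ne_zero
    apply mul_right_cancel₀ hX
    rw [← hpeel', hprod_range, ← hsplit, sub_mul, one_mul, ← pow_succ,
      Nat.sub_add_cancel hp.pos]
  -- apply the Bell functional
  have heven : Even (p - 1) := by
    rcases hodd with ⟨m, hm⟩
    exact ⟨m, by omega⟩
  have hfinal : (bell (p - 1) : ZMod p) - 1
      = (numDerangements (p - 1) : ZMod p) := by
    have := congrArg (bellPhi p) key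
    rw [map_sub, bellPhi_X_pow, bellPhi_gfallPoly, heven.neg_one_pow, one_mul] at this
    have h1 : bellPhi p (1 : Polynomial (ZMod p)) = 1 := by
      have := bellPhi_X_pow p 0
      simpa [bell] using this
    rw [h1] at this
    exact this
  have : (bell (p - 1) : ZMod p) = ((numDerangements (p - 1) + 1 : ℕ) : ZMod p) := by
    push_cast
    linear_combination hfinal
  exact (ZMod.natCast_eq_natCast_iff _ _ _).mp this
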